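/- Components for K > 1/4: for every real number K > 1/4, the set {p ∈ ℝ² : h_{0,K}(p) = 1 and det(Hess h_{0,K})(p) < 0} has exactly 4 connected components, and these components are pairwise equivalent: for any two of them C and C′ there exists A ∈ GL(2,ℝ) with h_{0,K}(A·v) = h_{0,K}(v) for all v ∈ ℝ² and A(C) = C′. -/

import Mathlib

/-!
The Hessian determinant of `h = h_{0,K}` factors as `-24 (x² - r₁y²)(x² - r₂y²)` with real roots
`0 < r₁ < r₂`, `r₁r₂ = K`, so the hyperbolic points form four open sectors around the axes. The
sector `x > √r₂ |y|` is convex, and the radial retraction `p ↦ h(p)^{-1/4} p` maps it onto its part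
of the level set `h = 1`, which is therefore connected. With `a⁴ = K`, the linear map
`(x, y) ↦ (a y, -x / a)` preserves `h`, squares to `-1` and permutes the sectors cyclically, so the
four pieces of the level set are the images of this one under its powers; they are distinct because
only the zeroth power keeps `(1, 0)` in the sector `x > √r₂ |y|`.
-/

noncomputable section
open Matrix

def hLK (L K : ℝ) (v : Fin 2 → ℝ) : ℝ :=
  v 0 ^ 4 - v 0 ^ 2 * v 1 ^ 2 + L * v 0 * v 1 ^ 3 + K * v 1 ^ 4

def hessDet2 (f : (Fin 2 → ℝ) → ℝ) (p : Fin 2 → ℝ) : ℝ :=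
  Matrix.det (Matrix.of fun i j : Fin 2 =>
    iteratedFDeriv ℝ 2 f p ![Pi.single i 1, Pi.single j 1])

def Hcurve (L K : ℝ) : Set (Fin 2 → ℝ) :=
  connectedComponentIn {p | hLK L K p = 1 ∧ hessDet2 (hLK L K) p < 0} ![1, 0]

def hypLevelSet (K : ℝ) : Set (Fin 2 → ℝ) :=
  {p | hLK 0 K p = 1 ∧ hessDet2 (hLK 0 K) p < 0}

def hypComponents (K : ℝ) : Set (Set (Fin 2 → ℝ)) :=
  {C | ∃ p ∈ hypLevelSet K, C = connectedComponentIn (hypLevelSet K) p}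

theorem connectedComponentIn_eq_inter_of_isOpen {X : Type*} [TopologicalSpace X]
    {S U V : Set X} (hU : IsOpen U) (hV : IsOpen V) (hUV : Disjoint U V) (hSUV : S ⊆ U ∪ V)
    (hSU : IsPreconnected (S ∩ U)) {p : X} (hp : p ∈ S ∩ U) :
    connectedComponentIn S p = S ∩ U :=
  subset_antisymm
    (Set.subset_inter (connectedComponentIn_subset S p)
      (isPreconnected_connectedComponentIn.subset_left_of_subset_union hU hV hUV
        ((connectedComponentIn_subset S p).trans hSUV) ⟨p, mem_connectedComponentIn hp.1, hp.2⟩))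
    (hSU.subset_connectedComponentIn hp Set.inter_subset_left)

namespace Matrix

variable {n : Type*} [Fintype n] [DecidableEq n]

theorem apply_pow_mulVec_eq {R X : Type*} [Semiring R] {f : (n → R) → X} {M : Matrix n n R}
    (hf : ∀ v, f (M *ᵥ v) = f v) (k : ℕ) (v : n → R) : f (M ^ k *ᵥ v) = f v := by
  induction k with
  | zero => rw [pow_zero, one_mulVec]
  | succ k ih => rw [pow_succ', ← mulVec_mulVec, hf, ih]

theorem image_pow_mulVec_image_pow_mulVec {R : Type*} [Semiring R] (M : Matrix n n R) (k l : ℕ)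
    (s : Set (n → R)) : (M ^ k).mulVec '' ((M ^ l).mulVec '' s) = (M ^ (k + l)).mulVec '' s := by
  rw [Set.image_image, pow_add]
  simp only [mulVec_mulVec]

theorem image_mulVec_connectedComponentIn {M : Matrix n n ℝ} (hM : IsUnit M)
    {S : Set (n → ℝ)} (hS : ∀ v, M *ᵥ v ∈ S ↔ v ∈ S) {p : n → ℝ} (hp : p ∈ S) :
    M.mulVec '' connectedComponentIn S p = connectedComponentIn S (M *ᵥ p) := by
  let e := (M.toLinearEquiv' hM.invertible).toContinuousLinearEquiv.toHomeomorph
  have hSe : e '' S = S := by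
    calc e '' S = e '' (e ⁻¹' S) := by rw [show e ⁻¹' S = S from Set.ext hS]
      _ = S := e.image_preimage S
  have := e.image_connectedComponentIn hp
  rwa [hSe] at this

end Matrix

section Hessian

open ContinuousLinearMap

theorem hasFDerivAt_hLK (L K : ℝ) (p : Fin 2 → ℝ) :
    HasFDerivAt (hLK L K)
      ((4 * p 0 ^ 3 - 2 * p 0 * p 1 ^ 2 + L * p 1 ^ 3) • proj 0 +
        (-2 * p 0 ^ 2 * p 1 + 3 * L * p 0 * p 1 ^ 2 + 4 * K * p 1 ^ 3) • proj 1 :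
        (Fin 2 → ℝ) →L[ℝ] ℝ) p := by
  have h0 := (proj 0 : (Fin 2 → ℝ) →L[ℝ] ℝ).hasFDerivAt (x := p)
  have h1 := (proj 1 : (Fin 2 → ℝ) →L[ℝ] ℝ).hasFDerivAt (x := p)
  exact ((((h0.pow 4).sub ((h0.pow 2).mul (h1.pow 2))).add
    ((h0.const_mul L).mul (h1.pow 3))).add ((h1.pow 4).const_mul K)).congr_fderiv
    (by ext v; simp; ring)

theorem hessDet2_hLK (L K : ℝ) (p : Fin 2 → ℝ) :
    hessDet2 (hLK L K) p =
      (12 * p 0 ^ 2 - 2 * p 1 ^ 2) * (-2 * p 0 ^ 2 + 6 * L * p 0 * p 1 + 12 * K * p 1 ^ 2) -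
        (-4 * p 0 * p 1 + 3 * L * p 1 ^ 2) ^ 2 := by
  have h0 := (proj 0 : (Fin 2 → ℝ) →L[ℝ] ℝ).hasFDerivAt (x := p)
  have h1 := (proj 1 : (Fin 2 → ℝ) →L[ℝ] ℝ).hasFDerivAt (x := p)
  have hx := (((h0.pow 3).const_mul 4).sub ((h0.const_mul 2).mul (h1.pow 2))).add
    ((h1.pow 3).const_mul L)
  have hy := ((((h0.pow 2).const_mul (-2)).mul h1).add ((h0.const_mul (3 * L)).mul (h1.pow 2))).add
    ((h1.pow 3).const_mul (4 * K))
  have hf' := ((hx.smul_const (proj 0 : (Fin 2 → ℝ) →L[ℝ] ℝ)).add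
    (hy.smul_const (proj 1 : (Fin 2 → ℝ) →L[ℝ] ℝ))).congr_of_eventuallyEq
    (f₁ := fderiv ℝ (hLK L K)) (.of_forall fun q => (hasFDerivAt_hLK L K q).fderiv)
  rw [hessDet2, det_fin_two]
  simp only [of_apply, iteratedFDeriv_two_apply, hf'.fderiv, cons_val_zero, cons_val_one,
    cons_val_fin_one, _root_.add_apply, _root_.sub_apply, _root_.smul_apply, smulRight_apply,
    proj_apply, smul_eq_mul, nsmul_eq_mul, Pi.single_eq_same, ne_eq, one_ne_zero, zero_ne_one,
    not_false_eq_true, Pi.single_eq_of_ne]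
  ring

end Hessian

theorem hLK_smul (L K c : ℝ) (p : Fin 2 → ℝ) : hLK L K (c • p) = c ^ 4 * hLK L K p := by
  simp only [hLK, Pi.smul_apply, smul_eq_mul]
  ring

theorem continuous_hLK (L K : ℝ) : Continuous (hLK L K) := by
  unfold hLK
  fun_prop

theorem hLK_zero_pos {K : ℝ} (hK : 1 / 4 < K) {p : Fin 2 → ℝ} (hp : p ≠ 0) : 0 < hLK 0 K p := by
  rcases eq_or_ne (p 1) 0 with h1 | h1
  · have h0 : p 0 ≠ 0 := fun h0 => hp (funext fun i => by fin_cases i <;> simp [h0, h1])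
    rw [show hLK 0 K p = p 0 ^ 4 by simp [hLK, h1]]
    positivity
  · have h4 : 0 < p 1 ^ 4 := by positivity
    unfold hLK
    nlinarith [sq_nonneg (p 0 ^ 2 - p 1 ^ 2 / 2), mul_pos (sub_pos.2 hK) h4]

theorem rpow_neg_inv_four_pow_four_mul {c : ℝ} (hc : 0 < c) : (c ^ (-(4 : ℝ)⁻¹)) ^ 4 * c = 1 := by
  rw [← Real.rpow_natCast, ← Real.rpow_mul hc.le, show -(4 : ℝ)⁻¹ * (4 : ℕ) = -1 by norm_num,
    Real.rpow_neg_one, inv_mul_cancel₀ hc.ne']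

/-- The larger root of `2r² - (12K - 1)r + 2K`; the parabolic lines of `h_{0,K}` are
`x² = r y²` and `x² = (K / r) y²`. -/
def parabolicRatio (K : ℝ) : ℝ := (12 * K - 1 + √(144 * K ^ 2 - 40 * K + 1)) / 4

section ParabolicRatio

variable {K : ℝ} (hK : 1 / 4 < K)
include hK

theorem parabolicRatio_pos : 0 < parabolicRatio K := by
  unfold parabolicRatio
  linarith [Real.sqrt_nonneg (144 * K ^ 2 - 40 * K + 1)]

theorem parabolicRatio_root :
    2 * parabolicRatio K ^ 2 - (12 * K - 1) * parabolicRatio K + 2 * K = 0 := by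
  have hD : 0 ≤ 144 * K ^ 2 - 40 * K + 1 := by nlinarith
  unfold parabolicRatio
  linear_combination (1 / 8 : ℝ) * Real.sq_sqrt hD

theorem lt_parabolicRatio_sq : K < parabolicRatio K ^ 2 := by
  have hD : 0 < 144 * K ^ 2 - 40 * K + 1 := by nlinarith
  have hr : (12 * K - 1) / 4 < parabolicRatio K := by
    unfold parabolicRatio
    linarith [Real.sqrt_pos.2 hD]
  nlinarith [parabolicRatio_root hK]

theorem hessDet2_hLK_zero_neg_iff (p : Fin 2 → ℝ) :
    hessDet2 (hLK 0 K) p < 0 ↔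
      parabolicRatio K * p 1 ^ 2 < p 0 ^ 2 ∨ parabolicRatio K * p 0 ^ 2 < K * p 1 ^ 2 := by
  set r := parabolicRatio K
  have hr := parabolicRatio_pos hK
  have hrK := lt_parabolicRatio_sq hK
  have hfactor : r * hessDet2 (hLK 0 K) p =
      -24 * ((r * p 0 ^ 2 - K * p 1 ^ 2) * (p 0 ^ 2 - r * p 1 ^ 2)) := by
    rw [hessDet2_hLK]
    linear_combination (-12 * p 0 ^ 2 * p 1 ^ 2) * parabolicRatio_root hK
  have hy := sq_nonneg (p 1)
  have hprod : hessDet2 (hLK 0 K) p < 0 ↔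
      0 < (r * p 0 ^ 2 - K * p 1 ^ 2) * (p 0 ^ 2 - r * p 1 ^ 2) := by
    constructor <;> intro h <;> nlinarith
  rw [hprod, mul_pos_iff]
  constructor
  · rintro (⟨-, h⟩ | ⟨h, -⟩)
    · exact .inl (by linarith)
    · exact .inr (by linarith)
  · rintro (h | h)
    · exact .inl ⟨by nlinarith, by linarith⟩
    · exact .inr ⟨by linarith, by nlinarith⟩

end ParabolicRatio

def sector (r : ℝ) : Set (Fin 2 → ℝ) := {p | 0 < p 0 ∧ r * p 1 ^ 2 < p 0 ^ 2}

theorem isOpen_sector (r : ℝ) : IsOpen (sector r) :=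
  (isOpen_lt continuous_const (continuous_apply 0)).inter
    (isOpen_lt (continuous_const.mul ((continuous_apply 1).pow 2)) ((continuous_apply 0).pow 2))

theorem smul_mem_sector {r c : ℝ} (hc : 0 < c) {p : Fin 2 → ℝ} (hp : p ∈ sector r) :
    c • p ∈ sector r := by
  simp only [sector, Set.mem_ofPred_eq, Pi.smul_apply, smul_eq_mul, mul_pow] at hp ⊢
  exact ⟨mul_pos hc hp.1, by nlinarith [pow_pos hc 2]⟩

theorem sector_eq_abs {r : ℝ} (hr : 0 ≤ r) : sector r = {p | √r * |p 1| < p 0} := by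
  ext p
  have hsq : (√r * |p 1|) ^ 2 = r * p 1 ^ 2 := by rw [mul_pow, Real.sq_sqrt hr, sq_abs]
  have hnn : 0 ≤ √r * |p 1| := by positivity
  simp only [sector, Set.mem_ofPred_eq]
  constructor
  · rintro ⟨h0, h⟩
    exact lt_of_pow_lt_pow_left₀ 2 h0.le (hsq ▸ h)
  · intro h
    exact ⟨hnn.trans_lt h, hsq ▸ pow_lt_pow_left₀ h hnn two_ne_zero⟩

theorem convex_sector {r : ℝ} (hr : 0 ≤ r) : Convex ℝ (sector r) := by
  rw [sector_eq_abs hr]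
  refine convex_iff_forall_pos.2 fun p hp q hq a b ha hb _ => ?_
  simp only [Set.mem_ofPred_eq, Pi.add_apply, Pi.smul_apply, smul_eq_mul] at hp hq ⊢
  calc √r * |a * p 1 + b * q 1| ≤ a * (√r * |p 1|) + b * (√r * |q 1|) := by
        have := abs_add_le (a * p 1) (b * q 1)
        rw [abs_mul, abs_mul, abs_of_pos ha, abs_of_pos hb] at this
        nlinarith [Real.sqrt_nonneg r]
    _ < a * p 0 + b * q 0 := by gcongr

section LevelSet

variable {K : ℝ} (hK : 1 / 4 < K)
include hK

theorem hypLevelSet_inter_sector_eq_image :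
    hypLevelSet K ∩ sector (parabolicRatio K) =
      (fun p => hLK 0 K p ^ (-(4 : ℝ)⁻¹) • p) '' sector (parabolicRatio K) := by
  ext p
  constructor
  · rintro ⟨⟨h1, -⟩, hp⟩
    exact ⟨p, hp, by simp [h1]⟩
  · rintro ⟨q, hq, rfl⟩
    have hpos : 0 < hLK 0 K q := hLK_zero_pos hK fun h => hq.1.ne' (by simp [h])
    have hmem := smul_mem_sector (Real.rpow_pos_of_pos hpos (-(4 : ℝ)⁻¹)) hq
    refine ⟨⟨?_, (hessDet2_hLK_zero_neg_iff hK _).2 (.inl hmem.2)⟩, hmem⟩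
    rw [hLK_smul, rpow_neg_inv_four_pow_four_mul hpos]

theorem isPreconnected_hypLevelSet_inter_sector :
    IsPreconnected (hypLevelSet K ∩ sector (parabolicRatio K)) := by
  rw [hypLevelSet_inter_sector_eq_image hK]
  refine (convex_sector (parabolicRatio_pos hK).le).isPreconnected.image _ ?_
  refine ((continuous_hLK 0 K).continuousOn.rpow_const fun q hq => .inl ?_).smul continuousOn_id
  exact (hLK_zero_pos hK fun h => hq.1.ne' (by simp [h])).ne'

theorem connectedComponentIn_hypLevelSet_eq_inter_sector {p : Fin 2 → ℝ}
    (hp : p ∈ hypLevelSet K ∩ sector (parabolicRatio K)) :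
    connectedComponentIn (hypLevelSet K) p = hypLevelSet K ∩ sector (parabolicRatio K) := by
  have hr := parabolicRatio_pos hK
  have hrK := lt_parabolicRatio_sq hK
  set r := parabolicRatio K
  refine connectedComponentIn_eq_inter_of_isOpen (isOpen_sector r)
    (V := {q | q 0 < 0} ∪ {q | r * q 0 ^ 2 < K * q 1 ^ 2})
    ((isOpen_lt (continuous_apply 0) continuous_const).union
      (isOpen_lt (continuous_const.mul ((continuous_apply 0).pow 2))
        (continuous_const.mul ((continuous_apply 1).pow 2))))
    ?_ ?_ (isPreconnected_hypLevelSet_inter_sector hK) hp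
  · refine Set.disjoint_left.2 fun q ⟨hq0, hq⟩ hqV => hqV.elim hq0.not_gt
      fun h : r * q 0 ^ 2 < K * q 1 ^ 2 => ?_
    nlinarith [mul_le_mul_of_nonneg_right hrK.le (sq_nonneg (q 1)), mul_lt_mul_of_pos_left hq hr]
  · intro q hq
    rcases (hessDet2_hLK_zero_neg_iff hK q).1 hq.2 with h | h
    · rcases lt_trichotomy (q 0) 0 with h0 | h0 | h0
      · exact .inr (.inl h0)
      · nlinarith [sq_nonneg (q 1)]
      · exact .inl ⟨h0, h⟩
    · exact .inr (.inr h)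

end LevelSet

def rot (a : ℝ) : Matrix (Fin 2) (Fin 2) ℝ := !![0, a; -a⁻¹, 0]

section Rotation

variable {a : ℝ}

theorem rot_mulVec (a : ℝ) (p : Fin 2 → ℝ) : rot a *ᵥ p = ![a * p 1, -(a⁻¹ * p 0)] := by
  ext i
  fin_cases i <;> simp [rot, mulVec, dotProduct, Fin.sum_univ_two]

theorem rot_sq (ha : a ≠ 0) : rot a ^ 2 = -1 := by
  rw [sq]
  ext i j
  fin_cases i <;> fin_cases j <;> simp [rot, ha]

theorem rot_pow_four (ha : a ≠ 0) : rot a ^ 4 = 1 := by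
  rw [show 4 = 2 * 2 from rfl, pow_mul, rot_sq ha]
  norm_num

theorem isUnit_rot (ha : a ≠ 0) : IsUnit (rot a) :=
  .of_mul_eq_one (rot a ^ 3) (by rw [← pow_succ', rot_pow_four ha])

theorem hLK_rot_mulVec (ha : a ≠ 0) (v : Fin 2 → ℝ) :
    hLK 0 (a ^ 4) (rot a *ᵥ v) = hLK 0 (a ^ 4) v := by
  simp only [rot_mulVec, hLK, cons_val_zero, cons_val_one, cons_val_fin_one]
  field_simp
  ring

theorem hessDet2_hLK_rot_mulVec (ha : a ≠ 0) (v : Fin 2 → ℝ) :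
    hessDet2 (hLK 0 (a ^ 4)) (rot a *ᵥ v) = hessDet2 (hLK 0 (a ^ 4)) v := by
  simp only [hessDet2_hLK, rot_mulVec, cons_val_zero, cons_val_one, cons_val_fin_one]
  field_simp
  ring

theorem rot_pow_mulVec_mem_hypLevelSet_iff (ha : a ≠ 0) (k : ℕ) (v : Fin 2 → ℝ) :
    rot a ^ k *ᵥ v ∈ hypLevelSet (a ^ 4) ↔ v ∈ hypLevelSet (a ^ 4) := by
  simp only [hypLevelSet, Set.mem_ofPred_eq, apply_pow_mulVec_eq (hLK_rot_mulVec ha),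
    apply_pow_mulVec_eq (hessDet2_hLK_rot_mulVec ha)]

theorem rot_mulVec_mem_sector_iff (ha : 0 < a) {r : ℝ} {p : Fin 2 → ℝ} :
    rot a *ᵥ p ∈ sector r ↔ 0 < p 1 ∧ r * p 0 ^ 2 < a ^ 4 * p 1 ^ 2 := by
  have hl : r * (a⁻¹ * p 0) ^ 2 = r * p 0 ^ 2 / a ^ 2 := by field_simp
  have hr : (a * p 1) ^ 2 = a ^ 4 * p 1 ^ 2 / a ^ 2 := by field_simp
  simp only [rot_mulVec, sector, Set.mem_ofPred_eq, cons_val_zero, cons_val_one, neg_sq, hl, hr,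
    mul_pos_iff_of_pos_left ha, div_lt_div_iff_of_pos_right (pow_pos ha 2)]

end Rotation

theorem exists_rot_pow_mulVec_eq {a : ℝ} (ha : 0 < a) (hK : 1 / 4 < a ^ 4) {p : Fin 2 → ℝ}
    (hp : hessDet2 (hLK 0 (a ^ 4)) p < 0) :
    ∃ j : Fin 4, ∃ q ∈ sector (parabolicRatio (a ^ 4)), rot a ^ (j : ℕ) *ᵥ q = p := by
  have hr := parabolicRatio_pos hK
  rcases (hessDet2_hLK_zero_neg_iff hK p).1 hp with h | h
  · rcases lt_trichotomy (p 0) 0 with h0 | h0 | h0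
    · refine ⟨2, -p, ⟨neg_pos.2 h0, by simpa using h⟩, ?_⟩
      change rot a ^ 2 *ᵥ -p = p
      rw [rot_sq ha.ne', neg_mulVec, one_mulVec, neg_neg]
    · nlinarith [sq_nonneg (p 1)]
    · exact ⟨0, p, ⟨h0, h⟩, by simp⟩
  · rcases lt_trichotomy (p 1) 0 with h1 | h1 | h1
    · refine ⟨1, rot a *ᵥ -p,
        rot_mulVec_mem_sector_iff ha |>.2 ⟨neg_pos.2 h1, by simpa using h⟩, ?_⟩
      change rot a ^ 1 *ᵥ (rot a *ᵥ -p) = p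
      rw [pow_one, mulVec_mulVec, ← sq, rot_sq ha.ne', neg_mulVec, one_mulVec, neg_neg]
    · rw [h1] at h
      nlinarith [sq_nonneg (p 0)]
    · refine ⟨3, rot a *ᵥ p, rot_mulVec_mem_sector_iff ha |>.2 ⟨h1, h⟩, ?_⟩
      change rot a ^ 3 *ᵥ (rot a *ᵥ p) = p
      rw [mulVec_mulVec, ← pow_succ, rot_pow_four ha.ne', one_mulVec]

theorem mod_four_eq_zero_of_rot_pow_mulVec_mem_sector {a r : ℝ} (ha : a ≠ 0) {n : ℕ}
    (h : rot a ^ n *ᵥ ![1, 0] ∈ sector r) : n % 4 = 0 := by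
  rw [pow_eq_pow_mod n (rot_pow_four ha)] at h
  obtain h4 | h4 | h4 | h4 : n % 4 = 0 ∨ n % 4 = 1 ∨ n % 4 = 2 ∨ n % 4 = 3 := by omega
  · exact h4
  all_goals rw [h4] at h
  · rw [pow_one, rot_mulVec] at h
    simp [sector] at h
  · rw [rot_sq ha, neg_mulVec, one_mulVec] at h
    norm_num [sector] at h
  · rw [pow_succ, rot_sq ha, ← mulVec_mulVec, rot_mulVec, neg_mulVec, one_mulVec] at h
    simp [sector] at h

theorem one_zero_mem_hypLevelSet_inter_sector {K : ℝ} (hK : 1 / 4 < K) :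
    ![1, 0] ∈ hypLevelSet K ∩ sector (parabolicRatio K) :=
  ⟨⟨by simp [hLK], (hessDet2_hLK_zero_neg_iff hK _).2 (.inl (by simp))⟩, by simp [sector]⟩

section Components

variable {a : ℝ} (ha : 0 < a) (hK : 1 / 4 < a ^ 4)
include ha hK

theorem hypComponents_eq_range :
    hypComponents (a ^ 4) = Set.range fun j : Fin 4 =>
      (rot a ^ (j : ℕ)).mulVec '' (hypLevelSet (a ^ 4) ∩ sector (parabolicRatio (a ^ 4))) := by
  have hinv := rot_pow_mulVec_mem_hypLevelSet_iff ha.ne'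
  have hunit (k : ℕ) := (isUnit_rot ha.ne').pow k
  ext C
  constructor
  · rintro ⟨p, hp, rfl⟩
    obtain ⟨j, q, hq, rfl⟩ := exists_rot_pow_mulVec_eq ha hK hp.2
    have hqS := (hinv j q).1 hp
    refine ⟨j, ?_⟩
    rw [← connectedComponentIn_hypLevelSet_eq_inter_sector hK ⟨hqS, hq⟩]
    exact image_mulVec_connectedComponentIn (hunit j) (hinv j) hqS
  · rintro ⟨j, rfl⟩
    have he := one_zero_mem_hypLevelSet_inter_sector hK
    refine ⟨_, (hinv j _).2 he.1, ?_⟩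
    rw [← image_mulVec_connectedComponentIn (hunit j) (hinv j) he.1,
      connectedComponentIn_hypLevelSet_eq_inter_sector hK he]

theorem injective_image_rot_pow_mulVec :
    Function.Injective fun j : Fin 4 =>
      (rot a ^ (j : ℕ)).mulVec '' (hypLevelSet (a ^ 4) ∩ sector (parabolicRatio (a ^ 4))) := by
  intro i j hij
  set C := hypLevelSet (a ^ 4) ∩ sector (parabolicRatio (a ^ 4))
  have hC : (rot a ^ (4 - i + j : ℕ)).mulVec '' C = C := by
    have := congrArg ((rot a ^ (4 - i : ℕ)).mulVec '' ·) hij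
    simp only [image_pow_mulVec_image_pow_mulVec, Nat.sub_add_cancel i.is_le',
      rot_pow_four ha.ne'] at this
    simpa using this.symm
  have he := one_zero_mem_hypLevelSet_inter_sector hK
  have := mod_four_eq_zero_of_rot_pow_mulVec_mem_sector ha.ne'
    (hC ▸ Set.mem_image_of_mem _ he).2
  omega

end Components

/-- **Components for `K > 1/4`.**
For `K > 1/4`, the set `{h_{0,K} = 1} ∩ {hyperbolic points}` has exactly 4 connected
components, pairwise equivalent under linear automorphisms of `h_{0,K}`. -/
theorem components_K_gt_quarter (K : ℝ) (hK : 1/4 < K) :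
    (hypComponents K).ncard = 4 ∧
    ∀ C ∈ hypComponents K, ∀ C' ∈ hypComponents K,
      ∃ A : Matrix (Fin 2) (Fin 2) ℝ, IsUnit A ∧
        (∀ v : Fin 2 → ℝ, hLK 0 K (A.mulVec v) = hLK 0 K v) ∧
        A.mulVec '' C = C' := by
  obtain ⟨a, ha, rfl⟩ : ∃ a : ℝ, 0 < a ∧ a ^ 4 = K :=
    ⟨K ^ ((4 : ℕ) : ℝ)⁻¹, by positivity, Real.rpow_inv_natCast_pow (by linarith) four_ne_zero⟩
  rw [hypComponents_eq_range ha hK]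
  refine ⟨by rw [Set.ncard_range_of_injective (injective_image_rot_pow_mulVec ha hK),
    Nat.card_eq_fintype_card, Fintype.card_fin], ?_⟩
  rintro _ ⟨i, rfl⟩ _ ⟨j, rfl⟩
  refine ⟨rot a ^ (j + (4 - i) : ℕ), (isUnit_rot ha.ne').pow _,
    apply_pow_mulVec_eq (hLK_rot_mulVec ha.ne') _, ?_⟩
  rw [image_pow_mulVec_image_pow_mulVec, add_assoc, Nat.sub_add_cancel i.is_le', pow_add,
    rot_pow_four ha.ne', mul_one]
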